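/- arXiv:1312.5299 — 7 statements merged into one kernel-verified Lean document; each statement's English description precedes it below -/
import Mathlib

section
/- (Virial Theorem for unitary operators) Let U be a unitary operator of class C¹(A) for a self-adjoint operator A. If φ is an eigenvector of U, then ⟨φ, (U*AU − A)φ⟩ = 0, where U*AU − A denotes the bounded extension of the commutator form. -/
open scoped ComplexInnerProductSpace
open ContinuousLinearMap

noncomputable section

variable {H : Type*} [NormedAddCommGroup H] [InnerProductSpace ℂ H] [CompleteSpace H]

/-- A bounded operator `B` is of class `C¹(A)` with commutator `ad_A(B) = B'` if the
sesquilinear form `(φ, ψ) ↦ ⟪Aφ, Bψ⟫ - ⟪φ, B(Aψ)⟫` on `D(A) × D(A)` is represented by the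
bounded operator `B'`. -/
def HasCommutator (A : H →ₗ.[ℂ] H) (B B' : H →L[ℂ] H) : Prop :=
  ∀ φ ψ : A.domain, ⟪A φ, B ψ⟫ - ⟪(φ : H), B (A ψ)⟫ = ⟪(φ : H), B' ψ⟫

/-- A unitary operator on a Hilbert space. -/
def IsUnitaryCLM (U : H →L[ℂ] H) : Prop :=
  adjoint U ∘L U = 1 ∧ U ∘L adjoint U = 1

/-!
Write `R τ = (A + iτ)⁻¹` for `τ > 0`; it exists because `‖(A + iτ) x‖ ≥ τ ‖x‖` and `A = A*`
make the range of `A + iτ` closed and dense. The vectors `Φ τ = iτ R τ φ = φ - A R τ φ` lie in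
`D(A)`, and `A R τ φ → 0` by density of `D(A)`, so `Φ τ → φ`. On `D(A)` the commutator form can be
evaluated: as `φ` is an eigenvector of both `U` and `U*`,
`⟪Φ τ, U' Φ τ⟫ = 2τ² ⟪A R τ φ, (U - c) R τ φ⟫`. Moreover `(A + iτ)(U - c) R τ φ = U' R τ φ`, so
`τ² ‖(U - c) R τ φ‖ ≤ ‖U'‖ ‖φ‖` and the form is `O(‖A R τ φ‖) → 0`. Hence `⟪φ, U' φ⟫ = 0`, and
`⟪φ, U* U' φ⟫ = c̄ ⟪φ, U' φ⟫`.
-/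

open Filter Topology

namespace LinearPMap

variable {E : Type*} [AddCommGroup E] [Module ℂ E]

def addIMul (A : E →ₗ.[ℂ] E) (τ : ℝ) : A.domain →ₗ[ℂ] E :=
  A.toFun + (Complex.I * τ) • A.domain.subtype

@[simp]
theorem addIMul_apply (A : E →ₗ.[ℂ] E) (τ : ℝ) (x : A.domain) :
    A.addIMul τ x = A x + (Complex.I * τ) • (x : E) :=
  rfl

end LinearPMap

namespace IsSelfAdjoint

variable {A : H →ₗ.[ℂ] H}

theorem isFormalAdjoint (hA : IsSelfAdjoint A) : A.IsFormalAdjoint A := by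
  have h := LinearPMap.adjoint_isFormalAdjoint hA.dense_domain
  rwa [show A.adjoint = A from hA] at h

theorem exists_mem_domain_of_inner_map (hA : IsSelfAdjoint A) {x w : H}
    (h : ∀ u : A.domain, ⟪w, (u : H)⟫ = ⟪x, A u⟫) : ∃ hx : x ∈ A.domain, A ⟨x, hx⟩ = w := by
  have hA' : A.adjoint = A := hA
  have hx : x ∈ A.adjoint.domain := LinearPMap.mem_adjoint_domain_of_exists _ ⟨w, h⟩
  refine ⟨hA' ▸ hx, ?_⟩
  rw [← LinearPMap.adjoint_apply_eq hA.dense_domain ⟨x, hx⟩ h]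
  exact ((le_of_eq hA').2 rfl).symm

theorem re_inner_map_I_mul_smul (hA : IsSelfAdjoint A) (τ : ℝ) (x : A.domain) :
    RCLike.re ⟪A x, (Complex.I * τ) • (x : H)⟫ = 0 := by
  have hreal : (starRingEnd ℂ) ⟪A x, (x : H)⟫ = ⟪A x, (x : H)⟫ := by
    rw [inner_conj_symm, hA.isFormalAdjoint x x]
  rw [inner_smul_right, RCLike.re_to_complex, Complex.mul_re]
  simp [Complex.conj_eq_iff_im.mp hreal]

theorem norm_addIMul_sq (hA : IsSelfAdjoint A) (τ : ℝ) (x : A.domain) :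
    ‖A.addIMul τ x‖ ^ 2 = ‖A x‖ ^ 2 + τ ^ 2 * ‖(x : H)‖ ^ 2 := by
  rw [LinearPMap.addIMul_apply, norm_add_sq (𝕜 := ℂ), hA.re_inner_map_I_mul_smul, norm_smul,
    mul_pow]
  simp

theorem abs_mul_norm_le_norm_addIMul (hA : IsSelfAdjoint A) (τ : ℝ) (x : A.domain) :
    |τ| * ‖(x : H)‖ ≤ ‖A.addIMul τ x‖ := by
  refine (pow_le_pow_iff_left₀ (by positivity) (norm_nonneg _) two_ne_zero).1 ?_
  rw [hA.norm_addIMul_sq, mul_pow, sq_abs]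
  exact le_add_of_nonneg_left (sq_nonneg _)

theorem norm_map_le_norm_addIMul (hA : IsSelfAdjoint A) (τ : ℝ) (x : A.domain) :
    ‖A x‖ ≤ ‖A.addIMul τ x‖ := by
  refine (pow_le_pow_iff_left₀ (norm_nonneg _) (norm_nonneg _) two_ne_zero).1 ?_
  rw [hA.norm_addIMul_sq]
  exact le_add_of_nonneg_right (by positivity)

theorem isClosed_range_addIMul (hA : IsSelfAdjoint A) {τ : ℝ} (hτ : τ ≠ 0) :
    IsClosed (LinearMap.range (A.addIMul τ) : Set H) := by
  refine isSeqClosed_iff_isClosed.mp fun ys y hys hy => ?_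
  choose xs hxs using hys
  have hcauchy : CauchySeq fun n => (xs n : H) := by
    refine Metric.cauchySeq_iff.2 fun ε hε => ?_
    obtain ⟨N, hN⟩ := Metric.cauchySeq_iff.1 hy.cauchySeq (|τ| * ε) (by positivity)
    refine ⟨N, fun m hm n hn => ?_⟩
    have h := hA.abs_mul_norm_le_norm_addIMul τ (xs m - xs n)
    rw [map_sub, hxs, hxs, ← dist_eq_norm] at h
    rw [dist_eq_norm]
    exact lt_of_mul_lt_mul_left (h.trans_lt (hN m hm n hn)) (abs_nonneg τ)
  obtain ⟨x, hx⟩ := cauchySeq_tendsto_of_complete hcauchy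
  have hAx : Tendsto (fun n => A (xs n)) atTop (𝓝 (y - (Complex.I * τ) • x)) := by
    have h (n : ℕ) : A (xs n) = ys n - (Complex.I * τ) • (xs n : H) := by
      rw [← hxs n, LinearPMap.addIMul_apply, add_sub_cancel_right]
    simpa only [h] using hy.sub (hx.const_smul _)
  obtain ⟨hxA, hAxA⟩ := hA.exists_mem_domain_of_inner_map (x := x) fun u => by
    refine tendsto_nhds_unique (hAx.inner tendsto_const_nhds) ?_
    have h (n : ℕ) := hA.isFormalAdjoint (xs n) u
    simpa only [h] using hx.inner (𝕜 := ℂ) (tendsto_const_nhds (x := A u))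
  exact ⟨⟨x, hxA⟩, by rw [LinearPMap.addIMul_apply, hAxA, sub_add_cancel]⟩

theorem orthogonal_range_addIMul (hA : IsSelfAdjoint A) {τ : ℝ} (hτ : τ ≠ 0) :
    (LinearMap.range (A.addIMul τ))ᗮ = ⊥ := by
  refine (Submodule.eq_bot_iff _).2 fun z hz => ?_
  have hconj : (starRingEnd ℂ) (Complex.I * τ) = -(Complex.I * τ) := by simp
  obtain ⟨hzA, hAz⟩ := hA.exists_mem_domain_of_inner_map (x := z) (w := (Complex.I * τ) • z)
    fun u => by
      have h := congrArg (starRingEnd ℂ) (hz (A.addIMul τ u) ⟨u, rfl⟩)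
      rw [LinearPMap.addIMul_apply, inner_add_left, inner_smul_left, hconj] at h
      simp only [map_add, map_mul, map_neg, hconj, inner_conj_symm, map_zero] at h
      rw [inner_smul_left, hconj]
      linear_combination -h
  have h := hA.abs_mul_norm_le_norm_addIMul (-τ) ⟨z, hzA⟩
  rw [LinearPMap.addIMul_apply, hAz, Complex.ofReal_neg, mul_neg, neg_smul, add_neg_cancel,
    norm_zero, abs_neg] at h
  exact norm_le_zero_iff.1 (nonpos_of_mul_nonpos_right h (abs_pos.2 hτ))

theorem surjective_addIMul (hA : IsSelfAdjoint A) {τ : ℝ} (hτ : τ ≠ 0) :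
    Function.Surjective (A.addIMul τ) := by
  have : CompleteSpace (LinearMap.range (A.addIMul τ)) :=
    (hA.isClosed_range_addIMul hτ).completeSpace_coe
  exact LinearMap.range_eq_top.1
    (Submodule.orthogonal_eq_bot_iff.1 (hA.orthogonal_range_addIMul hτ))

theorem norm_map_sq_le_of_addIMul_eq (hA : IsSelfAdjoint A) {τ : ℝ} (hτ : τ ≠ 0) {φ : H}
    {x : A.domain} (hx : A.addIMul τ x = φ) (ψ : A.domain) :
    ‖A x‖ ^ 2 ≤ ‖φ‖ * (‖φ - ψ‖ + ‖A ψ‖ / |τ|) := by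
  have hφ : RCLike.re ⟪A x, φ⟫ = ‖A x‖ ^ 2 := by
    rw [← hx, LinearPMap.addIMul_apply, inner_add_right, map_add,
      hA.re_inner_map_I_mul_smul, add_zero, inner_self_eq_norm_sq]
  have hsplit : RCLike.re ⟪A x, φ⟫ = RCLike.re ⟪A x, φ - ψ⟫ + RCLike.re ⟪(x : H), A ψ⟫ := by
    rw [← hA.isFormalAdjoint, ← map_add, ← inner_add_right, sub_add_cancel]
  have hAx : ‖A x‖ ≤ ‖φ‖ := hx ▸ hA.norm_map_le_norm_addIMul τ x
  have hxφ : ‖(x : H)‖ ≤ ‖φ‖ / |τ| := by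
    rw [le_div_iff₀ (abs_pos.2 hτ), mul_comm, ← hx]
    exact hA.abs_mul_norm_le_norm_addIMul τ x
  calc ‖A x‖ ^ 2 ≤ ‖A x‖ * ‖φ - ψ‖ + ‖(x : H)‖ * ‖A ψ‖ := by
        rw [← hφ, hsplit]
        exact add_le_add (re_inner_le_norm _ _) (re_inner_le_norm _ _)
    _ ≤ ‖φ‖ * ‖φ - ψ‖ + ‖φ‖ / |τ| * ‖A ψ‖ := by gcongr
    _ = ‖φ‖ * (‖φ - ψ‖ + ‖A ψ‖ / |τ|) := by ring

theorem tendsto_map_of_addIMul_eq (hA : IsSelfAdjoint A) {φ : H} {r : ℝ → A.domain}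
    (hr : ∀ᶠ τ in atTop, A.addIMul τ (r τ) = φ) : Tendsto (fun τ => A (r τ)) atTop (𝓝 0) := by
  have hsq : Tendsto (fun τ => ‖A (r τ)‖ ^ 2) atTop (𝓝 0) := by
    refine tendsto_order.2 ⟨fun b hb => .of_forall fun τ => hb.trans_le (sq_nonneg _),
      fun b hb => ?_⟩
    obtain ⟨ψ, hψ, hφψ⟩ := Metric.mem_closure_iff.1 (hA.dense_domain φ) (b / (2 * (‖φ‖ + 1)))
      (by positivity)
    have hφψ' : ‖φ‖ * ‖φ - ψ‖ ≤ b / 2 := by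
      rw [← dist_eq_norm]
      calc ‖φ‖ * dist φ ψ ≤ (‖φ‖ + 1) * (b / (2 * (‖φ‖ + 1))) := by gcongr; linarith
        _ = b / 2 := by field_simp
    have hlim : Tendsto (fun τ : ℝ => ‖φ‖ * ‖A ⟨ψ, hψ⟩‖ / |τ|) atTop (𝓝 0) :=
      tendsto_const_nhds.div_atTop tendsto_abs_atTop_atTop
    filter_upwards [hr, hlim.eventually (gt_mem_nhds (half_pos hb)), eventually_gt_atTop 0]
      with τ hτ hsmall hτpos
    calc ‖A (r τ)‖ ^ 2 ≤ ‖φ‖ * (‖φ - ψ‖ + ‖A ⟨ψ, hψ⟩‖ / |τ|) :=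
          hA.norm_map_sq_le_of_addIMul_eq hτpos.ne' hτ ⟨ψ, hψ⟩
      _ = ‖φ‖ * ‖φ - ψ‖ + ‖φ‖ * ‖A ⟨ψ, hψ⟩‖ / |τ| := by ring
      _ < b := by linarith
  refine tendsto_zero_iff_norm_tendsto_zero.2 ?_
  simpa only [Real.sqrt_sq (norm_nonneg _), Real.sqrt_zero] using hsq.sqrt

end IsSelfAdjoint

theorem ContinuousLinearMap.adjoint_apply_eq_conj_smul {U : H →L[ℂ] H}
    (hU : adjoint U ∘L U = 1) {φ : H} {c : ℂ} (hφ : U φ = c • φ) :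
    adjoint U φ = (starRingEnd ℂ) c • φ := by
  have hUU (x : H) : adjoint U (U x) = x := by
    simpa using congrArg (fun T : H →L[ℂ] H => T x) hU
  rcases eq_or_ne φ 0 with rfl | hφ0
  · simp
  have hc : (starRingEnd ℂ) c * c = 1 := by
    have h : ⟪U φ, U φ⟫ = ⟪φ, φ⟫ := by rw [← adjoint_inner_right, hUU]
    rw [hφ, inner_smul_left, inner_smul_right, ← mul_assoc] at h
    exact (mul_left_eq_self₀.1 h).resolve_right (inner_self_ne_zero.2 hφ0)
  calc adjoint U φ = ((starRingEnd ℂ) c * c) • adjoint U φ := by rw [hc, one_smul]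
    _ = (starRingEnd ℂ) c • φ := by rw [mul_smul, ← map_smul, ← hφ, hUU]

namespace HasCommutator

variable {A : H →ₗ.[ℂ] H} {B B' : H →L[ℂ] H}

theorem exists_mem_domain (hA : IsSelfAdjoint A) (hC : HasCommutator A B B') (ψ : A.domain) :
    ∃ h : B ψ ∈ A.domain, A ⟨B ψ, h⟩ = B (A ψ) + B' ψ := by
  refine hA.exists_mem_domain_of_inner_map fun u => ?_
  have h := congrArg (starRingEnd ℂ) (hC u ψ)
  simp only [map_sub, inner_conj_symm] at h
  rw [inner_add_left]
  linear_combination -h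

variable {φ : H} {c : ℂ} {τ : ℝ} {x : A.domain}

theorem abs_mul_norm_sub_smul_le (hA : IsSelfAdjoint A) (hC : HasCommutator A B B')
    (hφ : B φ = c • φ) (hx : A.addIMul τ x = φ) : |τ| * ‖B x - c • (x : H)‖ ≤ ‖B' x‖ := by
  obtain ⟨hBx, hABx⟩ := hC.exists_mem_domain hA x
  have hd : A.addIMul τ (⟨B x, hBx⟩ - c • x) = B' x := by
    rw [map_sub, map_smul, hx, LinearPMap.addIMul_apply, hABx, ← hφ, ← hx,
      LinearPMap.addIMul_apply, map_add, map_smul]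
    abel
  simpa [hd] using hA.abs_mul_norm_le_norm_addIMul τ (⟨B x, hBx⟩ - c • x)

theorem inner_apply_self_eq_two_mul_inner (hA : IsSelfAdjoint A) (hC : HasCommutator A B B')
    (hφ : B φ = c • φ) (hφ' : adjoint B φ = (starRingEnd ℂ) c • φ) (hx : A.addIMul τ x = φ) :
    ⟪(x : H), B' x⟫ = 2 * ⟪A x, B x - c • (x : H)⟫ := by
  have hAx : A x = φ - (Complex.I * τ) • (x : H) := by
    rw [← hx, LinearPMap.addIMul_apply, add_sub_cancel_right]
  have hconj : (starRingEnd ℂ) (Complex.I * τ) = -(Complex.I * τ) := by simp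
  have hφB (y : H) : ⟪φ, B y⟫ = c * ⟪φ, y⟫ := by
    rw [← adjoint_inner_left, hφ', inner_smul_left, Complex.conj_conj]
  have hsymm := hA.isFormalAdjoint x x
  rw [← hC x x]
  rw [hAx] at hsymm ⊢
  simp only [map_sub, map_smul, hφ, inner_sub_left, inner_sub_right, inner_smul_left,
    inner_smul_right, hconj, hφB] at hsymm ⊢
  linear_combination c * hsymm

theorem norm_inner_smul_apply_smul_le (hA : IsSelfAdjoint A) (hC : HasCommutator A B B')
    (hφ : B φ = c • φ) (hφ' : adjoint B φ = (starRingEnd ℂ) c • φ) (hx : A.addIMul τ x = φ) :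
    ‖⟪(Complex.I * τ) • (x : H), B' ((Complex.I * τ) • (x : H))⟫‖ ≤
      2 * ‖B'‖ * ‖φ‖ * ‖A x‖ := by
  rw [map_smul, inner_smul_left, inner_smul_right,
    hC.inner_apply_self_eq_two_mul_inner hA hφ hφ' hx]
  simp only [norm_mul, Complex.norm_conj, Complex.norm_I, one_mul, Complex.norm_real,
    Real.norm_eq_abs, Complex.norm_two]
  calc |τ| * (|τ| * (2 * ‖⟪A x, B x - c • (x : H)⟫‖))
      ≤ |τ| * (|τ| * (2 * (‖A x‖ * ‖B x - c • (x : H)‖))) := by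
        gcongr; exact norm_inner_le_norm _ _
    _ = 2 * ‖A x‖ * |τ| * (|τ| * ‖B x - c • (x : H)‖) := by ring
    _ ≤ 2 * ‖A x‖ * |τ| * (‖B'‖ * ‖(x : H)‖) := by
        have h := (hC.abs_mul_norm_sub_smul_le hA hφ hx).trans (B'.le_opNorm _)
        exact mul_le_mul_of_nonneg_left h (by positivity)
    _ = 2 * ‖B'‖ * ‖A x‖ * (|τ| * ‖(x : H)‖) := by ring
    _ ≤ 2 * ‖B'‖ * ‖A x‖ * ‖φ‖ := by
        gcongr; exact hx ▸ hA.abs_mul_norm_le_norm_addIMul τ x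
    _ = 2 * ‖B'‖ * ‖φ‖ * ‖A x‖ := by ring

end HasCommutator

theorem virial_unitary_general
    (A : H →ₗ.[ℂ] H) (hA : IsSelfAdjoint A)
    (U U' : H →L[ℂ] H) (hU : IsUnitaryCLM U)
    (hC : HasCommutator A U U')
    (φ : H) (c : ℂ) (heig : U φ = c • φ) :
    ⟪φ, (adjoint U ∘L U') φ⟫ = 0 := by
  have hadj := adjoint_apply_eq_conj_smul hU.1 heig
  choose! r hr using fun τ (hτ : 0 < τ) => hA.surjective_addIMul hτ.ne' φ
  have hr' : ∀ᶠ τ in atTop, A.addIMul τ (r τ) = φ := (eventually_gt_atTop 0).mono hr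
  have he := hA.tendsto_map_of_addIMul_eq hr'
  set Φ : ℝ → H := fun τ => (Complex.I * τ) • (r τ : H)
  have hΦ : Tendsto Φ atTop (𝓝 φ) := by
    refine (sub_zero φ ▸ tendsto_const_nhds.sub he).congr' (hr'.mono fun τ h => ?_)
    rw [← h, LinearPMap.addIMul_apply, add_sub_cancel_left]
  have hlim : Tendsto (fun τ => ⟪Φ τ, U' (Φ τ)⟫) atTop (𝓝 ⟪φ, U' φ⟫) :=
    hΦ.inner ((U'.continuous.tendsto φ).comp hΦ)
  have hzero : Tendsto (fun τ => ⟪Φ τ, U' (Φ τ)⟫) atTop (𝓝 0) := by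
    refine squeeze_zero_norm'
      (hr'.mono fun τ h => hC.norm_inner_smul_apply_smul_le hA heig hadj h) ?_
    simpa using he.norm.const_mul (2 * ‖U'‖ * ‖φ‖)
  rw [comp_apply, adjoint_inner_right, heig, inner_smul_left, tendsto_nhds_unique hlim hzero,
    mul_zero]

/-- **Virial theorem for unitary operators.** If `U` is a unitary operator of class
`C¹(A)` and `φ` is an eigenvector of `U`, then `⟪φ, (U*AU - A)φ⟫ = 0`, where
`U*AU - A = U* ∘ ad_A(U)`. -/
theorem virial_unitary
    (A : H →ₗ.[ℂ] H) (hA : IsSelfAdjoint A)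
    (U U' : H →L[ℂ] H) (hU : IsUnitaryCLM U)
    (hC : HasCommutator A U U')
    (φ : H) (hφ : φ ≠ 0) (c : ℂ) (heig : U φ = c • φ) :
    ⟪φ, (adjoint U ∘L U') φ⟫ = 0 :=
  virial_unitary_general A hA U U' hU hC φ c heig
end
end

section
/- Let A be a self-adjoint operator and B a bounded self-adjoint operator in C¹(A). For each ε ∈ [−1,1], the sesquilinear form Q_ε(φ,ψ) = ⟨Aφ, e^{εB}ψ⟩ − ⟨e^{εB}φ, Aψ⟩ on D(A)×D(A) extends to a bounded form on H×H, and there is a constant C > 0 such that |Q_ε(φ,ψ)| ≤ C·|ε|·‖[A,B]‖·‖e^{εB}φ‖·‖ψ‖ for all φ, ψ ∈ H and all ε ∈ [−1,1]. -/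
/-!
Because `A` is self-adjoint, `B` maps `D(A)` into itself with `A B = B A + B'` there, so the
commutators `[A, Bⁿ] = Σₖ Bᵏ B' Bⁿ⁻¹⁻ᵏ` have norm at most `n ‖B'‖ ‖B‖ⁿ⁻¹`. Summing the
exponential series termwise gives `Q_ε = Σₙ εⁿ/n! [A, Bⁿ]` with `‖Q_ε‖ ≤ |ε| ‖B'‖ e^‖B‖`, and
`‖φ‖ ≤ ‖e^{-εB}‖ ‖e^{εB} φ‖ ≤ e^‖B‖ ‖e^{εB} φ‖`.
-/

open scoped ComplexInnerProductSpace
open ContinuousLinearMap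

noncomputable section

variable {H : Type*} [NormedAddCommGroup H] [InnerProductSpace ℂ H] [CompleteSpace H]

section NormedAlgebra

open scoped Nat

theorem norm_pow_le_of_norm_one_le {R : Type*} [SeminormedRing R] (h1 : ‖(1 : R)‖ ≤ 1)
    (x : R) (n : ℕ) : ‖x ^ n‖ ≤ ‖x‖ ^ n := by
  rcases n.eq_zero_or_pos with rfl | hn
  · simpa using h1
  · exact norm_pow_le' x hn

theorem norm_exp_le_exp_norm (𝕂 : Type*) {𝔸 : Type*} [RCLike 𝕂] [NormedRing 𝔸]
    [NormedAlgebra 𝕂 𝔸] [CompleteSpace 𝔸] (h1 : ‖(1 : 𝔸)‖ ≤ 1) (x : 𝔸) :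
    ‖NormedSpace.exp x‖ ≤ Real.exp ‖x‖ := by
  rw [Real.exp_eq_exp_ℝ]
  refine (NormedSpace.exp_series_hasSum_exp' (𝕂 := 𝕂) x).norm_le_of_bounded
    (NormedSpace.expSeries_div_hasSum_exp ‖x‖) fun n => ?_
  calc ‖(n !⁻¹ : 𝕂) • x ^ n‖ = (n ! : ℝ)⁻¹ * ‖x ^ n‖ := by
        rw [norm_smul, norm_inv, RCLike.norm_natCast]
    _ ≤ (n ! : ℝ)⁻¹ * ‖x‖ ^ n := by gcongr; exact norm_pow_le_of_norm_one_le h1 x n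
    _ = ‖x‖ ^ n / n ! := inv_mul_eq_div _ _

theorem norm_le_exp_norm_mul_norm_exp_apply {𝕂 E : Type*} [RCLike 𝕂] [NormedAddCommGroup E]
    [NormedSpace 𝕂 E] [CompleteSpace E] (X : E →L[𝕂] E) (v : E) :
    ‖v‖ ≤ Real.exp ‖X‖ * ‖NormedSpace.exp X v‖ := by
  have hX : X ∈ Metric.eball 0 (NormedSpace.expSeries 𝕂 (E →L[𝕂] E)).radius :=
    (NormedSpace.expSeries_radius_eq_top 𝕂 (E →L[𝕂] E)).symm ▸ edist_lt_top _ _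
  have hinv : NormedSpace.exp (-X) * NormedSpace.exp X = 1 :=
    (NormedSpace.invertibleExpOfMemBall (𝕂 := 𝕂) hX).invOf_mul_self
  calc ‖v‖ = ‖NormedSpace.exp (-X) (NormedSpace.exp X v)‖ := by
        rw [← mul_apply_eq_comp, hinv, one_apply_eq_self]
    _ ≤ ‖NormedSpace.exp (-X)‖ * ‖NormedSpace.exp X v‖ := le_opNorm _ _
    _ ≤ Real.exp ‖X‖ * ‖NormedSpace.exp X v‖ := by
        gcongr
        simpa using norm_exp_le_exp_norm 𝕂 norm_id_le (-X)

/-- If `b'` is the commutator `[a, b]` then `powCommutator b b' n` is `[a, bⁿ]`. -/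
def powCommutator {R : Type*} [Ring R] (b b' : R) : ℕ → R
  | 0 => 0
  | n + 1 => powCommutator b b' n * b + b ^ n * b'

theorem norm_powCommutator_succ_le {R : Type*} [SeminormedRing R] (h1 : ‖(1 : R)‖ ≤ 1)
    (b b' : R) (n : ℕ) : ‖powCommutator b b' (n + 1)‖ ≤ (n + 1) * ‖b'‖ * ‖b‖ ^ n := by
  induction n with
  | zero => simp [powCommutator]
  | succ n ih =>
    calc ‖powCommutator b b' (n + 1) * b + b ^ (n + 1) * b'‖
        ≤ ‖powCommutator b b' (n + 1)‖ * ‖b‖ + ‖b‖ ^ (n + 1) * ‖b'‖ :=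
          norm_add_le_of_le (norm_mul_le _ _)
            (norm_mul_le_of_le (norm_pow_le_of_norm_one_le h1 b _) le_rfl)
      _ ≤ (n + 1) * ‖b'‖ * ‖b‖ ^ n * ‖b‖ + ‖b‖ ^ (n + 1) * ‖b'‖ := by gcongr
      _ = (↑(n + 1) + 1) * ‖b'‖ * ‖b‖ ^ (n + 1) := by push_cast; ring

section expCommutator

variable {𝕂 𝔸 : Type*} [RCLike 𝕂] [NormedRing 𝔸] [NormedAlgebra 𝕂 𝔸]

variable (𝕂) in
/-- If `b'` is the commutator `[a, b]` then `expCommutator 𝕂 z b b'` is `[a, exp (z • b)]`,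
summed termwise over the exponential series. -/
def expCommutator (z : 𝕂) (b b' : 𝔸) : 𝔸 :=
  ∑' n, (n !⁻¹ : 𝕂) • z ^ n • powCommutator b b' n

theorem norm_expCommutator_term_succ_le (h1 : ‖(1 : 𝔸)‖ ≤ 1) (z : 𝕂) (b b' : 𝔸) (n : ℕ) :
    ‖((n + 1) !⁻¹ : 𝕂) • z ^ (n + 1) • powCommutator b b' (n + 1)‖
      ≤ ‖z‖ * ‖b'‖ * ((‖z‖ * ‖b‖) ^ n / n !) := by
  rw [norm_smul, norm_smul, norm_inv, RCLike.norm_natCast, norm_pow]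
  calc ((n + 1) ! : ℝ)⁻¹ * (‖z‖ ^ (n + 1) * ‖powCommutator b b' (n + 1)‖)
      ≤ ((n + 1) ! : ℝ)⁻¹ * (‖z‖ ^ (n + 1) * ((n + 1) * ‖b'‖ * ‖b‖ ^ n)) := by
        gcongr; exact norm_powCommutator_succ_le h1 b b' n
    _ = ‖z‖ * ‖b'‖ * ((‖z‖ * ‖b‖) ^ n / n !) := by
        rw [Nat.factorial_succ]; push_cast; field_simp; ring

theorem summable_norm_expCommutator_term (h1 : ‖(1 : 𝔸)‖ ≤ 1) (z : 𝕂) (b b' : 𝔸) :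
    Summable fun n => ‖(n !⁻¹ : 𝕂) • z ^ n • powCommutator b b' n‖ :=
  (summable_nat_add_iff 1).mp <| .of_nonneg_of_le (fun _ => norm_nonneg _)
    (norm_expCommutator_term_succ_le h1 z b b') ((Real.summable_pow_div_factorial _).mul_left _)

theorem norm_expCommutator_le (h1 : ‖(1 : 𝔸)‖ ≤ 1) (z : 𝕂) (b b' : 𝔸) :
    ‖expCommutator 𝕂 z b b'‖ ≤ ‖z‖ * ‖b'‖ * Real.exp (‖z‖ * ‖b‖) := by
  have hs := summable_norm_expCommutator_term h1 z b b'
  calc ‖expCommutator 𝕂 z b b'‖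
      ≤ ∑' n, ‖(n !⁻¹ : 𝕂) • z ^ n • powCommutator b b' n‖ := norm_tsum_le_tsum_norm hs
    _ = ∑' n, ‖((n + 1) !⁻¹ : 𝕂) • z ^ (n + 1) • powCommutator b b' (n + 1)‖ := by
        rw [hs.tsum_eq_zero_add]; simp [powCommutator]
    _ ≤ ∑' n, ‖z‖ * ‖b'‖ * ((‖z‖ * ‖b‖) ^ n / n !) :=
        Summable.tsum_le_tsum (norm_expCommutator_term_succ_le h1 z b b')
          ((summable_nat_add_iff 1).mpr hs) ((Real.summable_pow_div_factorial _).mul_left _)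
    _ = ‖z‖ * ‖b'‖ * Real.exp (‖z‖ * ‖b‖) := by
        rw [tsum_mul_left, Real.exp_eq_exp_ℝ, (NormedSpace.expSeries_div_hasSum_exp _).tsum_eq]

end expCommutator

end NormedAlgebra

namespace HasCommutator

variable {E : Type*} [NormedAddCommGroup E] [InnerProductSpace ℂ E] {A : E →ₗ.[ℂ] E}
  {B B' S S' : E →L[ℂ] E}

open LinearPMap in
/-- `Bψ ∈ D(A†) = D(A)` because `φ ↦ ⟪Bψ, Aφ⟫` is represented by `B(Aψ) + B'ψ`. -/
theorem exists_mem_domain_apply_eq [CompleteSpace E] (hA : IsSelfAdjoint A)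
    (hB : HasCommutator A B B') (ψ : A.domain) :
    ∃ h : B ψ ∈ A.domain, A ⟨B ψ, h⟩ = B (A ψ) + B' ψ := by
  have hrep : ∀ φ : A.domain, ⟪B (A ψ) + B' ψ, (φ : E)⟫ = ⟪B ψ, A φ⟫ := fun φ => by
    have h := congrArg (starRingEnd ℂ) (hB φ ψ)
    simp only [_root_.map_sub, inner_conj_symm] at h
    rw [inner_add_left]
    linear_combination -h
  have hadj : B ψ ∈ A†.domain := mem_adjoint_domain_of_exists _ ⟨_, hrep⟩
  exact ⟨hA.le.1 hadj, (hA.le.2 rfl).symm.trans (adjoint_apply_eq hA.dense_domain ⟨_, hadj⟩ hrep)⟩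

theorem one [CompleteSpace E] (hA : IsSelfAdjoint A) : HasCommutator A 1 0 := fun φ ψ => by
  have hsymm := LinearPMap.adjoint_isFormalAdjoint hA.dense_domain
  rw [LinearPMap.isSelfAdjoint_def.mp hA] at hsymm
  simp [hsymm φ ψ]

theorem mul [CompleteSpace E] (hA : IsSelfAdjoint A) (hS : HasCommutator A S S')
    (hB : HasCommutator A B B') :
    HasCommutator A (S * B) (S * B' + S' * B) := fun φ ψ => by
  obtain ⟨hBψ, hABψ⟩ := hB.exists_mem_domain_apply_eq hA ψ
  have := hS φ ⟨B ψ, hBψ⟩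
  rw [hABψ] at this
  simp only [mul_apply_eq_comp, add_apply, map_add, inner_add_right] at this ⊢
  linear_combination this

theorem pow [CompleteSpace E] (hA : IsSelfAdjoint A) (hB : HasCommutator A B B') (n : ℕ) :
    HasCommutator A (B ^ n) (powCommutator B B' n) := by
  induction n with
  | zero => exact one hA
  | succ n ih =>
    rw [pow_succ, powCommutator, add_comm]
    exact ih.mul hA hB

theorem smul (hS : HasCommutator A S S') (c : ℂ) : HasCommutator A (c • S) (c • S') :=
  fun φ ψ => by simp only [smul_apply, inner_smul_right, ← mul_sub, hS φ ψ]

theorem of_hasSum {ι : Type*} {S S' : ι → E →L[ℂ] E} {T T' : E →L[ℂ] E} (hS : HasSum S T)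
    (hS' : HasSum S' T') (h : ∀ i, HasCommutator A (S i) (S' i)) : HasCommutator A T T' :=
  fun φ ψ => by
    let L : (E →L[ℂ] E) →L[ℂ] ℂ :=
      (innerSL ℂ (A φ)).comp (apply ℂ E (ψ : E)) - (innerSL ℂ (φ : E)).comp (apply ℂ E (A ψ))
    let M : (E →L[ℂ] E) →L[ℂ] ℂ := (innerSL ℂ (φ : E)).comp (apply ℂ E (ψ : E))
    exact (hS.mapL L).unique (by simpa [L, M, h _ φ ψ] using hS'.mapL M)

theorem exp [CompleteSpace E] (hA : IsSelfAdjoint A) (hB : HasCommutator A B B') (z : ℂ) :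
    HasCommutator A (NormedSpace.exp (z • B)) (expCommutator ℂ z B B') := by
  refine of_hasSum (NormedSpace.exp_series_hasSum_exp' (𝕂 := ℂ) (z • B))
    (summable_norm_expCommutator_term norm_id_le z B B').of_norm.hasSum fun n => ?_
  rw [smul_pow]
  exact ((hB.pow hA n).smul _).smul _

end HasCommutator

/-- For a bounded self-adjoint `B ∈ C¹(A)`, the forms
`Q_ε(φ, ψ) = ⟪Aφ, e^{εB}ψ⟫ - ⟪e^{εB}φ, Aψ⟫` extend to bounded forms, with
`|Q_ε(φ, ψ)| ≤ C |ε| ‖[A,B]‖ ‖e^{εB}φ‖ ‖ψ‖`, uniformly in `ε ∈ [-1,1]`. -/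
theorem exp_commutator_form_estimate
    (A : H →ₗ.[ℂ] H) (hA : IsSelfAdjoint A)
    (B B' : H →L[ℂ] H) (hBsa : IsSelfAdjoint B)
    (hB : HasCommutator A B B') :
    ∃ C > (0 : ℝ), ∀ ε ∈ Set.Icc (-1 : ℝ) 1, ∃ Q : H →L[ℂ] H,
      (∀ φ ψ : A.domain,
        ⟪A φ, NormedSpace.exp ((ε : ℂ) • B) ψ⟫
          - ⟪NormedSpace.exp ((ε : ℂ) • B) φ, A ψ⟫ = ⟪(φ : H), Q ψ⟫) ∧
      ∀ φ ψ : H,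
        ‖⟪φ, Q ψ⟫‖ ≤ C * |ε| * ‖B'‖ * ‖NormedSpace.exp ((ε : ℂ) • B) φ‖ * ‖ψ‖ := by
  refine ⟨Real.exp ‖B‖ * Real.exp ‖B‖, by positivity, fun ε hε =>
    ⟨expCommutator ℂ (ε : ℂ) B B', fun φ ψ => ?_, fun φ ψ => ?_⟩⟩
  · have hE : IsSelfAdjoint (NormedSpace.exp ((ε : ℂ) • B)) :=
      (IsSelfAdjoint.smul (Complex.conj_ofReal ε) hBsa).exp
    rw [show ⟪NormedSpace.exp ((ε : ℂ) • B) φ, A ψ⟫ = _ from hE.isSymmetric (φ : H) (A ψ)]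
    exact hB.exp hA ε φ ψ
  · have hεB : ‖(ε : ℂ) • B‖ = |ε| * ‖B‖ := by
      rw [norm_smul, Complex.norm_real, Real.norm_eq_abs]
    have hεB_le : |ε| * ‖B‖ ≤ ‖B‖ := mul_le_of_le_one_left (norm_nonneg B) (abs_le.mpr hε)
    have hQ : ‖expCommutator ℂ (ε : ℂ) B B'‖ ≤ |ε| * ‖B'‖ * Real.exp ‖B‖ := by
      refine (norm_expCommutator_le norm_id_le _ B B').trans ?_
      rw [Complex.norm_real, Real.norm_eq_abs]
      gcongr
    have hφ : ‖φ‖ ≤ Real.exp ‖B‖ * ‖NormedSpace.exp ((ε : ℂ) • B) φ‖ :=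
      (norm_le_exp_norm_mul_norm_exp_apply _ φ).trans (by rw [hεB]; gcongr)
    calc ‖⟪φ, expCommutator ℂ (ε : ℂ) B B' ψ⟫‖
        ≤ ‖φ‖ * (‖expCommutator ℂ (ε : ℂ) B B'‖ * ‖ψ‖) :=
          (norm_inner_le_norm _ _).trans (by gcongr; exact le_opNorm _ _)
      _ ≤ Real.exp ‖B‖ * ‖NormedSpace.exp ((ε : ℂ) • B) φ‖ *
            (|ε| * ‖B'‖ * Real.exp ‖B‖ * ‖ψ‖) := by gcongr
      _ = _ := by ring
end
end

section
/- Let U be unitary, B a bounded self-adjoint operator with B ≥ 0, and for ε ∈ [0,1], z ∈ ℂ with 1/2 < |z| < 1, define T_ε⁺(z) = 1 − z·U*·e^{−εB}. Then T_ε⁺(z) is invertible in B(H) and its inverse G_ε⁺(z) satisfies ‖G_ε⁺(z)‖ ≤ C·(1 − |z|²)^{−1} for a constant C > 0 independent of ε and z. -/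
/-!
`U*` is unitary and `e^{-εB}` is a contraction, because the spectrum of `-εB` lies in
`(-∞, 0]`; hence `‖z U* e^{-εB}‖ ≤ |z| < 1` and the Neumann series inverts `T_ε⁺(z)` with
`‖G_ε⁺(z)‖ ≤ (1 - |z|)⁻¹ ≤ 2 (1 - |z|²)⁻¹`.
-/

open scoped ComplexInnerProductSpace
open ContinuousLinearMap

noncomputable section

variable {H : Type*} [NormedAddCommGroup H] [InnerProductSpace ℂ H] [CompleteSpace H]

lemma CStarRing.norm_le_one_of_mem_unitary {E : Type*} [NormedRing E] [StarRing E] [CStarRing E]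
    {U : E} (hU : U ∈ unitary E) : ‖U‖ ≤ 1 := by
  nontriviality E
  exact (CStarRing.norm_of_mem_unitary hU).le

lemma IsUnitaryCLM.norm_adjoint_le_one {U : H →L[ℂ] H} (hU : IsUnitaryCLM U) :
    ‖adjoint U‖ ≤ 1 :=
  CStarRing.norm_le_one_of_mem_unitary (Unitary.star_mem (Unitary.mem_iff.mpr hU))

lemma norm_exp_neg_le_one {A : Type*} [CStarAlgebra A] [PartialOrder A] [StarOrderedRing A]
    {a : A} (ha : 0 ≤ a) : ‖NormedSpace.exp (-a)‖ ≤ 1 := by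
  rw [← CFC.real_exp_eq_normedSpace_exp ha.isSelfAdjoint.neg]
  refine norm_cfc_le zero_le_one fun x hx => ?_
  have hx0 : x ≤ 0 := by
    rw [← spectrum.neg_eq, Set.mem_neg] at hx
    linarith [spectrum_nonneg_of_nonneg ha hx]
  rw [Real.norm_of_nonneg (Real.exp_pos x).le]
  exact Real.exp_le_one_iff.mpr hx0

lemma norm_exp_neg_smul_le_one {B : H →L[ℂ] H} (hB : B.IsPositive) {ε : ℝ} (hε : 0 ≤ ε) :
    ‖NormedSpace.exp (((-ε : ℝ) : ℂ) • B)‖ ≤ 1 := by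
  have hεB : 0 ≤ ε • B := smul_nonneg hε ((nonneg_iff_isPositive B).mpr hB)
  rw [Complex.coe_smul, neg_smul]
  exact norm_exp_neg_le_one hεB

lemma Units.norm_inv_oneSub_le {R : Type*} [NormedRing R] [HasSummableGeomSeries R]
    (h1 : ‖(1 : R)‖ ≤ 1) (t : R) (ht : ‖t‖ < 1) :
    ‖(↑(Units.oneSub t ht)⁻¹ : R)‖ ≤ (1 - ‖t‖)⁻¹ :=
  (tsum_geometric_le_of_norm_lt_one t ht).trans (by linarith)

lemma inv_one_sub_le_two_mul_inv_one_sub_sq {r : ℝ} (h0 : 0 ≤ r) (h1 : r < 1) :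
    (1 - r)⁻¹ ≤ 2 * (1 - r ^ 2)⁻¹ := by
  have hpos : 0 < 1 - r := by linarith
  rw [← div_eq_mul_inv, le_div_iff₀ (by nlinarith), ← div_eq_inv_mul, div_le_iff₀ hpos]
  nlinarith

/-- Let `U` be unitary and `B ≥ 0` bounded self-adjoint. For `ε ∈ [0,1]` and
`1/2 < |z| < 1`, the operator `T_ε⁺(z) = 1 - z U* e^{-εB}` is boundedly invertible with
`‖T_ε⁺(z)⁻¹‖ ≤ C (1 - |z|²)⁻¹` for a constant `C` independent of `ε` and `z`. -/
theorem resolvent_bound_Teps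
    (U : H →L[ℂ] H) (hU : IsUnitaryCLM U)
    (B : H →L[ℂ] H) (hB : B.IsPositive) :
    ∃ C > (0 : ℝ), ∀ ε ∈ Set.Icc (0 : ℝ) 1, ∀ z : ℂ, 1 / 2 < ‖z‖ → ‖z‖ < 1 →
      ∃ G : H →L[ℂ] H,
        (1 - z • (adjoint U ∘L NormedSpace.exp (((-ε : ℝ) : ℂ) • B))) ∘L G = 1 ∧
        G ∘L (1 - z • (adjoint U ∘L NormedSpace.exp (((-ε : ℝ) : ℂ) • B))) = 1 ∧
        ‖G‖ ≤ C * (1 - ‖z‖ ^ 2)⁻¹ := by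
  refine ⟨2, two_pos, fun ε hε z _ hz => ?_⟩
  set a := z • (adjoint U ∘L NormedSpace.exp (((-ε : ℝ) : ℂ) • B))
  have ha : ‖a‖ ≤ ‖z‖ := calc
    ‖a‖ ≤ ‖z‖ * (‖adjoint U‖ * ‖NormedSpace.exp (((-ε : ℝ) : ℂ) • B)‖) := by
      rw [norm_smul]; gcongr; exact opNorm_comp_le _ _
    _ ≤ ‖z‖ * (1 * 1) := by
      gcongr
      exacts [hU.norm_adjoint_le_one, norm_exp_neg_smul_le_one hB hε.1]
    _ = ‖z‖ := by ring
  have ha1 : ‖a‖ < 1 := ha.trans_lt hz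
  refine ⟨↑(Units.oneSub a ha1)⁻¹, (Units.oneSub a ha1).mul_inv,
    (Units.oneSub a ha1).inv_mul, ?_⟩
  calc ‖(↑(Units.oneSub a ha1)⁻¹ : H →L[ℂ] H)‖ ≤ (1 - ‖a‖)⁻¹ :=
        Units.norm_inv_oneSub_le norm_id_le a ha1
    _ ≤ (1 - ‖z‖)⁻¹ := by gcongr
    _ ≤ 2 * (1 - ‖z‖ ^ 2)⁻¹ := inv_one_sub_le_two_mul_inv_one_sub_sq (norm_nonneg z) hz
end
end

section
/- Let (Ω, F, P) be the two-sided Bernoulli shift space Ω = {−1,1}^ℤ with product measure, U the Koopman operator Uf = f∘S of the shift S on L²(Ω,P), and A the self-adjoint operator which on each Fourier–Walsh basis vector f_σ (σ ⊂ ℤ finite nonempty) acts by A f_σ = (|σ|^{−1}·Σ_{i∈σ} i)·f_σ and annihilates the vacuum. Then U ∈ C¹(A) and U*AU − A = Q^⊥, the orthogonal projection onto the orthogonal complement of the constant functions. -/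
open scoped ComplexInnerProductSpace
open ContinuousLinearMap

noncomputable section

variable {H : Type*} [NormedAddCommGroup H] [InnerProductSpace ℂ H] [CompleteSpace H]

/-- The average `|σ|⁻¹ ∑_{i ∈ σ} i` of a finite set of integers (zero for `σ = ∅`). -/
def wAvg (σ : Finset ℤ) : ℝ := (σ.sum fun i => (i : ℝ)) / σ.card

/-! The shift moves every nonempty `σ` to `σ + 1`, which raises the average
`wAvg σ` by exactly `1`, while it fixes `∅`, where `A` vanishes. In the Fourier–Walsh basis
the form `⟪Aφ, Uψ⟫ - ⟪φ, UAψ⟫` is therefore diagonal, with coefficient `1` off the vacuum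
and `0` on it: it is represented by `U Q^⊥`, and `U*(U Q^⊥) = Q^⊥`. -/

theorem wAvg_image_add (σ : Finset ℤ) (hσ : σ.Nonempty) (c : ℤ) :
    wAvg (σ.image (· + c)) = wAvg σ + c := by
  have hinj : Set.InjOn (· + c) (σ : Set ℤ) := (add_left_injective c).injOn
  have hcard : (σ.card : ℝ) ≠ 0 := by exact_mod_cast hσ.card_pos.ne'
  rw [wAvg, wAvg, Finset.sum_image hinj, Finset.card_image_of_injOn hinj]
  push_cast
  rw [Finset.sum_add_distrib, Finset.sum_const, nsmul_eq_mul]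
  field_simp

section

variable {E : Type*} [NormedAddCommGroup E] [InnerProductSpace ℂ E]

theorem HilbertBasis.inner_starProjection_span_singleton {ι : Type*} [DecidableEq ι]
    (b : HilbertBasis ι ℂ E) (i j : ι) (x : E) :
    ⟪b i, (ℂ ∙ b j).starProjection x⟫ = if i = j then ⟪b j, x⟫ else 0 := by
  rw [Submodule.starProjection_unit_singleton ℂ (b.orthonormal.1 j), inner_smul_right,
    orthonormal_iff_ite.mp b.orthonormal i j]
  split_ifs <;> simp

theorem hasCommutator_of_hilbertBasis {ι : Type*} (b : HilbertBasis ι ℂ E) (a : ι → ℝ)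
    {A : E →ₗ.[ℂ] E} (hA : ∀ (ψ : A.domain) i, ⟪b i, A ψ⟫ = (a i : ℂ) * ⟪b i, (ψ : E)⟫)
    {B B' : E →L[ℂ] E}
    (hB' : ∀ (ψ : A.domain) i, ⟪b i, B' ψ⟫ = a i * ⟪b i, B ψ⟫ - ⟪b i, B (A ψ)⟫) :
    HasCommutator A B B' := by
  intro φ ψ
  have hAφ : ∀ i, ⟪A φ, b i⟫ = a i * ⟪(φ : E), b i⟫ := fun i => by
    rw [← inner_conj_symm, hA, map_mul, Complex.conj_ofReal, inner_conj_symm]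
  rw [← b.tsum_inner_mul_inner (A φ), ← b.tsum_inner_mul_inner (φ : E) (B (A ψ)),
    ← b.tsum_inner_mul_inner (φ : E) (B' ψ),
    ← (b.summable_inner_mul_inner _ _).tsum_sub (b.summable_inner_mul_inner _ _)]
  refine tsum_congr fun i => ?_
  rw [hAφ, hB']
  ring

end

theorem bernoulli_koopman_commutator_general
    (f : HilbertBasis (Finset ℤ) ℂ H)
    (U : H →L[ℂ] H) (hU : IsUnitaryCLM U)
    (hUf : ∀ σ : Finset ℤ, U (f σ) = f (σ.image (· + 1)))
    (A : H →ₗ.[ℂ] H)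
    (hAval : ∀ (ψ : A.domain) (σ : Finset ℤ),
      ⟪f σ, A ψ⟫ = (wAvg σ : ℂ) * ⟪f σ, (ψ : H)⟫) :
    ∃ U' : H →L[ℂ] H, HasCommutator A U U' ∧
      adjoint U ∘L U' =
        1 - (ℂ ∙ f ∅).subtypeL ∘L (Submodule.orthogonalProjectionOnto (ℂ ∙ f ∅) : H →L[ℂ] ℂ ∙ f ∅) := by
  classical
  change ∃ U' : H →L[ℂ] H, _ ∧ _ = 1 - (ℂ ∙ f ∅).starProjection
  refine ⟨U ∘L (1 - (ℂ ∙ f ∅).starProjection), hasCommutator_of_hilbertBasis f wAvg hAval ?_, ?_⟩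
  · intro ψ σ
    obtain ⟨τ, rfl⟩ : ∃ τ : Finset ℤ, σ = τ.image (· + 1) :=
      ⟨σ.image (· - 1), by simp [Finset.image_image, Function.comp_def]⟩
    have hshift (x : H) : ⟪f (τ.image (· + 1)), U x⟫ = ⟪f τ, x⟫ := by
      rw [← hUf, U.inner_map_map_iff_adjoint_comp_self.mpr hU.1]
    rw [comp_apply, hshift, hshift, hshift, hAval, sub_apply, one_apply_eq_self, inner_sub_right,
      f.inner_starProjection_span_singleton]
    rcases τ.eq_empty_or_nonempty with rfl | hτ
    · simp [wAvg]
    · rw [wAvg_image_add τ hτ, if_neg hτ.ne_empty]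
      push_cast
      ring
  · rw [← comp_assoc, hU.1, ContinuousLinearMap.one_def, id_comp]

/-- In the Bernoulli shift model, realized through the Fourier–Walsh
orthonormal basis `(f_σ)` of `L²(Ω, P)` indexed by finite subsets `σ ⊂ ℤ`, the Koopman
operator `U` (given by `U f_σ = f_{σ+1}`) is of class `C¹(A)` for the self-adjoint operator
`A` acting diagonally by `A f_σ = (|σ|⁻¹ ∑_{i∈σ} i) f_σ` (annihilating the vacuum `f_∅`),
and `U*AU - A = Q^⊥`, the projection onto the orthogonal complement of the constants. -/
theorem bernoulli_koopman_commutator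
    (f : HilbertBasis (Finset ℤ) ℂ H)
    (U : H →L[ℂ] H) (hU : IsUnitaryCLM U)
    (hUf : ∀ σ : Finset ℤ, U (f σ) = f (σ.image (· + 1)))
    (A : H →ₗ.[ℂ] H)
    (hAdom : ∀ x : H,
      x ∈ A.domain ↔ Summable (fun σ : Finset ℤ => (wAvg σ * ‖⟪f σ, x⟫‖) ^ 2))
    (hAval : ∀ (ψ : A.domain) (σ : Finset ℤ),
      ⟪f σ, A ψ⟫ = (wAvg σ : ℂ) * ⟪f σ, (ψ : H)⟫) :
    ∃ U' : H →L[ℂ] H, HasCommutator A U U' ∧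
      adjoint U ∘L U' =
        1 - (ℂ ∙ f ∅).subtypeL ∘L (Submodule.orthogonalProjectionOnto (ℂ ∙ f ∅) : H →L[ℂ] ℂ ∙ f ∅) :=
  bernoulli_koopman_commutator_general f U hU hUf A hAval
end
end

section
/- With Ω the two-sided Bernoulli shift space, the restriction U^⊥ of the Koopman operator to L²_⊥(Ω,P) = {f ∈ L² : ∫ f dP = 0} satisfies (U^⊥)* A^⊥ U^⊥ − A^⊥ = I, where A^⊥ is the restriction of the averaged-position operator A to L²_⊥. Consequently U^⊥ is strictly propagating with respect to A^⊥ on the whole circle and belongs to C^∞(A^⊥). -/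
/-!
`A` is diagonal in the Fourier–Walsh basis with eigenvalue `wAvg σ` on `f σ`, and `U` maps
`f σ` to `f (σ + 1)`, whose eigenvalue is `wAvg σ + 1`. Expanding both terms of the commutator
form `⟪Aφ, Uψ⟫ - ⟪φ, U Aψ⟫` by Parseval in the shifted basis, the two sums differ termwise by
exactly the coefficients of `⟪φ, Uψ⟫`, so `[A, U] = U`. Hence `U* [A, U] = U* U = 1`, and since
the commutator is a multiple of `U` itself, every iterated commutator is again `U`.
-/

open scoped ComplexInnerProductSpace
open ContinuousLinearMap

noncomputable section

variable {H : Type*} [NormedAddCommGroup H] [InnerProductSpace ℂ H] [CompleteSpace H]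

/-- `U` is of class `C^∞(A)`: there is a sequence of bounded operators starting at `U` in
which each term has the next one as its commutator with `A`. -/
def HasCommutatorSeq (A : H →ₗ.[ℂ] H) (U : H →L[ℂ] H) : Prop :=
  ∃ seq : ℕ → (H →L[ℂ] H), seq 0 = U ∧ ∀ n, HasCommutator A (seq n) (seq (n + 1))

/-- Translation `σ ↦ σ + 1` on nonempty finite subsets of `ℤ`. -/
def shiftNE (σ : {s : Finset ℤ // s ≠ ∅}) : {s : Finset ℤ // s ≠ ∅} :=
  ⟨σ.1.image (· + 1), fun h => σ.2 (Finset.image_eq_empty.mp h)⟩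

section Commutator

variable {E : Type*} [NormedAddCommGroup E] [InnerProductSpace ℂ E] {A : E →ₗ.[ℂ] E}

theorem HasCommutator.smul_s15 {B B' : E →L[ℂ] E} (h : HasCommutator A B B') (z : ℂ) :
    HasCommutator A (z • B) (z • B') := by
  intro φ ψ
  simp only [smul_apply, inner_smul_right, ← mul_sub, h φ ψ]

theorem hasCommutatorSeq_of_hasCommutator_smul {U : E →L[ℂ] E} {z : ℂ}
    (h : HasCommutator A U (z • U)) : HasCommutatorSeq A U :=
  ⟨fun n => z ^ n • U, one_smul ℂ U, fun n => by
    simpa only [pow_succ, mul_smul] using h.smul_s15 (z ^ n)⟩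

end Commutator

section ShiftedBasis

variable {ι : Type*} (f : HilbertBasis ι ℂ H) (e : ι ≃ ι) {U : H →L[ℂ] H}

theorem HilbertBasis.hasSum_inner_mul_inner_of_shift (hU : adjoint U ∘L U = 1)
    (hUf : ∀ i, U (f i) = f (e i)) (x y : H) :
    HasSum (fun i => ⟪x, f (e i)⟫ * ⟪f i, y⟫) ⟪x, U y⟫ := by
  have hcoeff : ∀ i, ⟪f (e i), U y⟫ = ⟪f i, y⟫ := fun i => by
    rw [← hUf, ← adjoint_inner_left, ← comp_apply, hU, one_apply_eq_self]
  simpa only [Function.comp_def, hcoeff] using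
    e.hasSum_iff.mpr (f.hasSum_inner_mul_inner x (U y))

theorem hasCommutator_of_shift_eigenvalues (hU : adjoint U ∘L U = 1)
    (hUf : ∀ i, U (f i) = f (e i)) {A : H →ₗ.[ℂ] H} (a : ι → ℝ)
    (hA : ∀ (ψ : A.domain) i, ⟪f i, A ψ⟫ = a i * ⟪f i, (ψ : H)⟫)
    (c : ℝ) (ha : ∀ i, a (e i) = a i + c) :
    HasCommutator A U ((c : ℂ) • U) := by
  intro φ ψ
  have hA' : ∀ i, ⟪A φ, f i⟫ = a i * ⟪(φ : H), f i⟫ := fun i => by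
    rw [← inner_conj_symm, hA, map_mul, Complex.conj_ofReal, inner_conj_symm]
  have hdiff := (f.hasSum_inner_mul_inner_of_shift e hU hUf (A φ) ψ).sub
    (f.hasSum_inner_mul_inner_of_shift e hU hUf φ (A ψ))
  have hscaled := (f.hasSum_inner_mul_inner_of_shift e hU hUf φ ψ).mul_left (c : ℂ)
  rw [smul_apply, inner_smul_right]
  refine hdiff.unique (hscaled.congr_fun fun i => ?_)
  rw [hA', hA, ha]
  push_cast
  ring

end ShiftedBasis

theorem wAvg_image_add_s15 {s : Finset ℤ} (hs : s.Nonempty) (k : ℤ) :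
    wAvg (s.image (· + k)) = wAvg s + k := by
  have hinj : Function.Injective (· + k) := add_left_injective k
  rw [wAvg, wAvg, Finset.sum_image fun a _ b _ h => hinj h, Finset.card_image_of_injective _ hinj]
  push_cast
  rw [Finset.sum_add_distrib, Finset.sum_const, nsmul_eq_mul]
  field_simp

def shiftNEEquiv : {s : Finset ℤ // s ≠ ∅} ≃ {s : Finset ℤ // s ≠ ∅} :=
  (Equiv.finsetCongr (Equiv.addRight 1)).subtypeEquiv fun s => by simp [Equiv.finsetCongr]

theorem shiftNEEquiv_apply (σ : {s : Finset ℤ // s ≠ ∅}) : shiftNEEquiv σ = shiftNE σ :=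
  Subtype.ext (Finset.map_eq_image _ _)

theorem wAvg_shiftNEEquiv (σ : {s : Finset ℤ // s ≠ ∅}) :
    wAvg (shiftNEEquiv σ).1 = wAvg σ.1 + 1 := by
  rw [shiftNEEquiv_apply]
  exact_mod_cast wAvg_image_add_s15 (Finset.nonempty_iff_ne_empty.mpr σ.2) 1

theorem bernoulli_koopman_restricted_strictly_propagating_general
    (f : HilbertBasis {s : Finset ℤ // s ≠ ∅} ℂ H)
    (U : H →L[ℂ] H) (hU : IsUnitaryCLM U)
    (hUf : ∀ σ, U (f σ) = f (shiftNE σ))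
    (A : H →ₗ.[ℂ] H)
    (hAval : ∀ (ψ : A.domain) (σ : {s : Finset ℤ // s ≠ ∅}),
      ⟪f σ, A ψ⟫ = (wAvg σ.1 : ℂ) * ⟪f σ, (ψ : H)⟫) :
    ∃ U' : H →L[ℂ] H, HasCommutator A U U' ∧
      adjoint U ∘L U' = 1 ∧
      (∃ c > (0 : ℝ), ((adjoint U ∘L U') - ((c : ℂ) • 1)).IsPositive) ∧
      HasCommutatorSeq A U := by
  have hcomm : HasCommutator A U (((1 : ℝ) : ℂ) • U) :=
    hasCommutator_of_shift_eigenvalues f shiftNEEquiv hU.1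
      (fun σ => by rw [shiftNEEquiv_apply, hUf]) (fun σ => wAvg σ.1) hAval 1 wAvg_shiftNEEquiv
  have hseq := hasCommutatorSeq_of_hasCommutator_smul hcomm
  rw [Complex.ofReal_one, one_smul] at hcomm
  exact ⟨U, hcomm, hU.1, ⟨1, one_pos, by simp [hU.1]⟩, hseq⟩

/-- On `L²_⊥(Ω,P)` (spanned by the Fourier–Walsh vectors `f_σ`, `σ ≠ ∅`),
the restricted Koopman operator `U^⊥` satisfies `(U^⊥)* A^⊥ U^⊥ - A^⊥ = I`; consequently
`U^⊥` is strictly propagating with respect to `A^⊥` on the whole circle and belongs to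
`C^∞(A^⊥)`. -/
theorem bernoulli_koopman_restricted_strictly_propagating
    (f : HilbertBasis {s : Finset ℤ // s ≠ ∅} ℂ H)
    (U : H →L[ℂ] H) (hU : IsUnitaryCLM U)
    (hUf : ∀ σ, U (f σ) = f (shiftNE σ))
    (A : H →ₗ.[ℂ] H)
    (hAdom : ∀ x : H,
      x ∈ A.domain ↔ Summable (fun σ : {s : Finset ℤ // s ≠ ∅} => (wAvg σ.1 * ‖⟪f σ, x⟫‖) ^ 2))
    (hAval : ∀ (ψ : A.domain) (σ : {s : Finset ℤ // s ≠ ∅}),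
      ⟪f σ, A ψ⟫ = (wAvg σ.1 : ℂ) * ⟪f σ, (ψ : H)⟫) :
    ∃ U' : H →L[ℂ] H, HasCommutator A U U' ∧
      adjoint U ∘L U' = 1 ∧
      (∃ c > (0 : ℝ), ((adjoint U ∘L U') - ((c : ℂ) • 1)).IsPositive) ∧
      HasCommutatorSeq A U :=
  bernoulli_koopman_restricted_strictly_propagating_general f U hU hUf A hAval
end
end

section
/- Let A be a self-adjoint operator and U, V unitary operators in C¹(A) such that U − V and ad_A(U − V) are compact. If there exist c > 0, a compact operator K, and a smooth compactly supported function φ on an open arc Θ ⊂ 𝕋 with Φ(U)(U*AU − A)Φ(U) ≥ c·Φ(U)² + K, then there exist c' > 0 and a compact operator K' with Φ(V)(V*AV − A)Φ(V) ≥ c'·Φ(V)² + K'. In other words, the Mourre (propagation) estimate on Θ is stable under compact C¹-perturbations. -/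
/-!
Modulo compact operators `V ≡ U` and `V' ≡ U'`; since unitaries are invertible, also `V* ≡ U*`.
Compact operators form a norm-closed two-sided ideal, so by Stone–Weierstrass the continuous
functional calculus respects this congruence: `Φ(V) ≡ Φ(U)`. Hence the two Mourre expressions
`Φ(W)(W*W')Φ(W) - c Φ(W)²` differ by a compact operator, which is absorbed into `K'`, with `c' = c`.
-/

open scoped ComplexInnerProductSpace
open ContinuousLinearMap

noncomputable section

variable {H : Type*} [NormedAddCommGroup H] [InnerProductSpace ℂ H] [CompleteSpace H]

section CompactOperatorIdeal

variable (𝕜 E : Type*) [NontriviallyNormedField 𝕜] [NormedAddCommGroup E] [NormedSpace 𝕜 E]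

def compactOperatorIdeal : TwoSidedIdeal (E →L[𝕜] E) :=
  .mk' {T | IsCompactOperator T} isCompactOperator_zero (fun hS hT => hS.add hT)
    (fun hT => hT.neg) (fun {S _} hT => hT.clm_comp S) (fun {_ T} hS => hS.comp_clm T)

variable {𝕜 E} in
@[simp]
theorem mem_compactOperatorIdeal {T : E →L[𝕜] E} :
    T ∈ compactOperatorIdeal 𝕜 E ↔ IsCompactOperator T :=
  TwoSidedIdeal.mem_mk' ..

theorem isClosed_compactOperatorIdeal [CompleteSpace E] :
    IsClosed (compactOperatorIdeal 𝕜 E : Set (E →L[𝕜] E)) := by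
  convert (isClosed_setOfPred_isCompactOperator : IsClosed {T : E →L[𝕜] E | IsCompactOperator T})
  exact Set.ext fun _ => mem_compactOperatorIdeal

end CompactOperatorIdeal

theorem cfcHomSuperset_restrict {R A : Type*} {p : A → Prop} [CommSemiring R] [StarRing R]
    [MetricSpace R] [IsTopologicalSemiring R] [ContinuousStar R] [Ring A] [StarRing A]
    [TopologicalSpace A] [Algebra R A] [ContinuousFunctionalCalculus R A p] {a : A} (ha : p a)
    {s : Set R} (hs : spectrum R a ⊆ s) {f : R → R} (hf : ContinuousOn f s) :
    cfcHomSuperset ha hs ⟨s.domRestrict f, hf.domRestrict⟩ = cfc f a := by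
  rw [cfcHomSuperset_apply, cfc_apply f a ha (hf.mono hs)]
  congr!

namespace TwoSidedIdeal

theorem ringCon_star_of_mem_unitary {R : Type*} [Ring R] [StarRing R] (I : TwoSidedIdeal R)
    {u v : R} (hu : u ∈ unitary R) (hv : v ∈ unitary R) (huv : I.ringCon u v) :
    I.ringCon (star u) (star v) := by
  have factor : star u - star v = star u * (v - u) * star v := by
    rw [mul_sub, sub_mul, mul_assoc, Unitary.mul_star_self_of_mem hv,
      Unitary.star_mul_self_of_mem hu, mul_one, one_mul]
  rw [rel_iff, factor]
  exact I.mul_mem_right _ _ (I.mul_mem_left _ _ ((rel_iff _ _ _).1 (I.ringCon.symm huv)))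

theorem exists_sub_eq_sub_of_ringCon {R : Type*} [Ring R] (I : TwoSidedIdeal R) {x y k : R}
    (hk : k ∈ I) (hxy : I.ringCon x y) : ∃ k' ∈ I, y - k' = x - k :=
  ⟨k + (y - x), I.add_mem hk ((rel_iff _ _ _).1 (I.ringCon.symm hxy)), by abel⟩

variable {A : Type*} [CStarAlgebra A] (I : TwoSidedIdeal A)

theorem ringCon_cfcHomSuperset (hI : IsClosed (I : Set A)) {a b : A} (hab : I.ringCon a b)
    (hab' : I.ringCon (star a) (star b)) (ha : IsStarNormal a) (hb : IsStarNormal b) {s : Set ℂ}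
    [CompactSpace s] (has : spectrum ℂ a ⊆ s) (hbs : spectrum ℂ b ⊆ s) (f : C(s, ℂ)) :
    I.ringCon (cfcHomSuperset ha has f) (cfcHomSuperset hb hbs f) := by
  induction f using ContinuousMap.induction_on_of_compact with
  | const r =>
    have : ContinuousMap.const s r = algebraMap ℂ C(s, ℂ) r := rfl
    simp only [this, AlgHomClass.commutes]
    exact I.ringCon.refl _
  | id => simpa only [cfcHomSuperset_id] using hab
  | star_id => simpa only [map_star, cfcHomSuperset_id] using hab'
  | add f g hf hg => simpa only [map_add] using I.ringCon.add hf hg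
  | mul f g hf hg => simpa only [map_mul] using I.ringCon.mul hf hg
  | frequently f hf =>
    have hclosed :
        IsClosed {g : C(s, ℂ) | I.ringCon (cfcHomSuperset ha has g) (cfcHomSuperset hb hbs g)} := by
      simp only [rel_iff]
      exact hI.preimage
        ((cfcHomSuperset_continuous ha has).sub (cfcHomSuperset_continuous hb hbs))
    exact hclosed.mem_of_frequently_of_tendsto hf Filter.tendsto_id

theorem ringCon_cfc (hI : IsClosed (I : Set A)) {a b : A} (hab : I.ringCon a b)
    (hab' : I.ringCon (star a) (star b)) [ha : IsStarNormal a] [hb : IsStarNormal b] (f : ℂ → ℂ)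
    (hf : ContinuousOn f (spectrum ℂ a ∪ spectrum ℂ b)) :
    I.ringCon (cfc f a) (cfc f b) := by
  have : CompactSpace ↥(spectrum ℂ a ∪ spectrum ℂ b) := isCompact_iff_compactSpace.mp
    ((spectrum.isCompact a).union (spectrum.isCompact b))
  rw [← cfcHomSuperset_restrict ha Set.subset_union_left hf,
    ← cfcHomSuperset_restrict hb Set.subset_union_right hf]
  exact I.ringCon_cfcHomSuperset hI hab hab' ha hb _ _ _

end TwoSidedIdeal

theorem IsUnitaryCLM.mem_unitary {U : H →L[ℂ] H} (hU : IsUnitaryCLM U) :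
    U ∈ unitary (H →L[ℂ] H) :=
  Unitary.mem_iff.2 hU

theorem mourre_estimate_stable_under_compact_perturbation_general
    (U U' V V' : H →L[ℂ] H)
    (hUu : IsUnitaryCLM U) (hVu : IsUnitaryCLM V)
    (hUVcpt : IsCompactOperator (⇑(U - V)))
    (hadcpt : IsCompactOperator (⇑(U' - V')))
    (φ : ℂ → ℂ) (hφcont : Continuous φ)
    (c : ℝ) (hc : 0 < c) (K : H →L[ℂ] H) (hK : IsCompactOperator (⇑K))
    (hmourre : (cfc φ U ∘L (adjoint U ∘L U') ∘L cfc φ U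
        - (c : ℂ) • (cfc φ U ∘L cfc φ U) - K).IsPositive) :
    ∃ c' > (0 : ℝ), ∃ K' : H →L[ℂ] H, IsCompactOperator (⇑K') ∧
      (cfc φ V ∘L (adjoint V ∘L V') ∘L cfc φ V
        - (c' : ℂ) • (cfc φ V ∘L cfc φ V) - K').IsPositive := by
  set I := compactOperatorIdeal ℂ H
  have hU := hUu.mem_unitary
  have hV := hVu.mem_unitary
  have := isStarNormal_of_mem_unitary hU
  have := isStarNormal_of_mem_unitary hV
  have hUV : I.ringCon U V := (I.rel_iff _ _).2 (mem_compactOperatorIdeal.2 hUVcpt)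
  have hUV' : I.ringCon U' V' := (I.rel_iff _ _).2 (mem_compactOperatorIdeal.2 hadcpt)
  have hUV_adj : I.ringCon (adjoint U) (adjoint V) := I.ringCon_star_of_mem_unitary hU hV hUV
  have hΦ : I.ringCon (cfc φ U) (cfc φ V) :=
    I.ringCon_cfc (isClosed_compactOperatorIdeal ℂ H) hUV hUV_adj φ hφcont.continuousOn
  have hmourre_mod : I.ringCon
      (cfc φ U * (adjoint U * U') * cfc φ U - (c : ℂ) • (cfc φ U * cfc φ U))
      (cfc φ V * (adjoint V * V') * cfc φ V - (c : ℂ) • (cfc φ V * cfc φ V)) :=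
    I.ringCon.sub (I.ringCon.mul (I.ringCon.mul hΦ (I.ringCon.mul hUV_adj hUV')) hΦ)
      (I.ringCon.toCon.smul (c : ℂ) (I.ringCon.mul hΦ hΦ))
  obtain ⟨K', hK', hK'_eq⟩ :=
    I.exists_sub_eq_sub_of_ringCon (mem_compactOperatorIdeal.2 hK) hmourre_mod
  simp only [← ContinuousLinearMap.mul_def] at hmourre ⊢
  exact ⟨c, hc, K', mem_compactOperatorIdeal.1 hK', hK'_eq ▸ hmourre⟩

/-- Stability of the Mourre (propagation) estimate under compact
`C¹`-perturbations: if `U, V ∈ C¹(A)` are unitary with `U - V` and `ad_A(U - V)` compact, and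
`Φ(U)(U*AU - A)Φ(U) ≥ c Φ(U)² + K` with `c > 0` and `K` compact (where `Φ(U)` is the
continuous functional calculus of the non-negative function `φ` applied to `U`), then there
are `c' > 0` and a compact `K'` with `Φ(V)(V*AV - A)Φ(V) ≥ c' Φ(V)² + K'`. -/
theorem mourre_estimate_stable_under_compact_perturbation
    (A : H →ₗ.[ℂ] H) (hA : IsSelfAdjoint A)
    (U U' V V' : H →L[ℂ] H)
    (hUu : IsUnitaryCLM U) (hVu : IsUnitaryCLM V)
    (hUC : HasCommutator A U U') (hVC : HasCommutator A V V')
    (hUVcpt : IsCompactOperator (⇑(U - V)))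
    (hadcpt : IsCompactOperator (⇑(U' - V')))
    (φ : ℂ → ℂ) (hφcont : Continuous φ)
    (hφpos : ∀ z, 0 ≤ (φ z).re ∧ (φ z).im = 0)
    (c : ℝ) (hc : 0 < c) (K : H →L[ℂ] H) (hK : IsCompactOperator (⇑K))
    (hmourre : (cfc φ U ∘L (adjoint U ∘L U') ∘L cfc φ U
        - (c : ℂ) • (cfc φ U ∘L cfc φ U) - K).IsPositive) :
    ∃ c' > (0 : ℝ), ∃ K' : H →L[ℂ] H, IsCompactOperator (⇑K') ∧
      (cfc φ V ∘L (adjoint V ∘L V') ∘L cfc φ V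
        - (c' : ℂ) • (cfc φ V ∘L cfc φ V) - K').IsPositive :=
  mourre_estimate_stable_under_compact_perturbation_general U U' V V' hUu hVu hUVcpt hadcpt φ hφcont
    c hc K hK hmourre

end
end

section
/- Let (γ_k)_{k∈ℤ} be a bounded complex sequence with sup_k |k·(γ_{k+1} − γ_k)| < ∞, D_γ the diagonal operator D_γ e_k = γ_k e_k on ℓ²(ℤ), T the bilateral shift, and A the position operator. Then D_γ belongs to C¹(TA + AT*), and the commutator is ad_{TA+AT*}(D_γ) = T·D_{x(γ−Sγ)} + D_{x(Sγ−γ)}·T*, where (Sγ)_k = γ_{k+1} and x denotes the sequence (k)_{k∈ℤ}. -/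
open scoped ComplexInnerProductSpace
open ContinuousLinearMap

noncomputable section

variable {H : Type*} [NormedAddCommGroup H] [InnerProductSpace ℂ H] [CompleteSpace H]

/-!
Expanding in the basis `e` with `a k = ⟪e k, φ⟫` and `d k = ⟪e k, D_γ ψ⟫`, the difference
`⟪Bφ, D_γ ψ⟫ - ⟪φ, D_γ Bψ⟫ - ⟪φ, ad(D_γ) ψ⟫` is the sum of the telescoping series
`∑ₖ (t (k - 1) - t k)` with `t k = k (conj (a k) d (k + 1) - conj (a (k + 1)) d k)`.
Its symmetric partial sums are `t (-n) - t n`, of size at most `n cₙ` for a summable `c`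
(products of the ℓ² sequences `a`, `d` are summable); since `∑ 1/n` diverges, their limit can only be `0`.
-/

open Filter Topology ComplexConjugate

theorem Finset.sum_Ioc_int_sub {M : Type*} [AddCommGroup M] (t : ℤ → M) {m n : ℤ} (h : m ≤ n) :
    ∑ k ∈ Finset.Ioc m n, (t (k - 1) - t k) = t m - t n := by
  induction n, h using Int.leInduction with
  | base => simp
  | succ n hmn ih =>
    rw [← Order.succ_eq_add_one, ← Finset.insert_Ioc_right_eq_Ioc_succ hmn,
      Finset.sum_insert (by simp), ih, Order.succ_eq_add_one, add_sub_cancel_right]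
    abel

theorem eq_zero_of_tendsto_of_norm_le_nat_mul {E : Type*} [NormedAddCommGroup E] {x : ℕ → E}
    {S : E} (hx : Tendsto x atTop (𝓝 S)) {c : ℕ → ℝ} (hc : Summable c)
    (hxc : ∀ n, ‖x n‖ ≤ n * c n) : S = 0 := by
  by_contra hS
  have hSpos : 0 < ‖S‖ := norm_pos_iff.2 hS
  have hfar : ∀ᶠ n in atTop, ‖S‖ / 2 < ‖x n‖ :=
    hx.norm.eventually (lt_mem_nhds (half_lt_self hSpos))
  refine Real.not_summable_one_div_natCast
    (.of_norm_bounded_eventually_nat (hc.mul_left (2 / ‖S‖)) ?_)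
  filter_upwards [hfar, eventually_gt_atTop 0] with n hn hn0
  have hn0' : (0 : ℝ) < n := by exact_mod_cast hn0
  rw [Real.norm_of_nonneg (by positivity), div_le_iff₀ hn0', div_mul_eq_mul_div,
    div_mul_eq_mul_div, le_div_iff₀ hSpos]
  linarith [hxc n]

theorem HasSum.eq_zero_of_int_telescope {E : Type*} [NormedAddCommGroup E] {t : ℤ → E} {S : E}
    (hS : HasSum (fun k => t (k - 1) - t k) S) {c : ℤ → ℝ} (hc : Summable c)
    (htc : ∀ k, ‖t k‖ ≤ |(k : ℝ)| * c k) : S = 0 := by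
  have hsym : Tendsto (fun n : ℕ => t (-n) - t n) atTop (𝓝 S) := by
    refine (hS.comp (Finset.tendsto_Ioc_neg_atTop_atTop.comp tendsto_natCast_atTop_atTop)).congr
      fun n => ?_
    exact Finset.sum_Ioc_int_sub t (by omega)
  have hcsym : Summable (fun n : ℕ => c (-n) + c n) :=
    ((hc.comp_injective neg_injective).comp_injective Nat.cast_injective).add
      (hc.comp_injective Nat.cast_injective)
  refine eq_zero_of_tendsto_of_norm_le_nat_mul hsym hcsym fun n => ?_
  calc ‖t (-n) - t n‖ ≤ ‖t (-n)‖ + ‖t n‖ := norm_sub_le _ _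
    _ ≤ n * c (-n) + n * c n := by
      gcongr
      · simpa using htc (-n)
      · simpa using htc n
    _ = n * (c (-n) + c n) := by ring

theorem Summable.norm_mul_norm {ι F G : Type*} [SeminormedAddCommGroup F]
    [SeminormedAddCommGroup G] {f : ι → F} {g : ι → G} (hf : Summable fun i => ‖f i‖ ^ 2)
    (hg : Summable fun i => ‖g i‖ ^ 2) : Summable fun i => ‖f i‖ * ‖g i‖ :=
  .of_nonneg_of_le (fun i => by positivity)
    (fun i => by nlinarith [two_mul_le_add_sq ‖f i‖ ‖g i‖, norm_nonneg (f i), norm_nonneg (g i)])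
    (hf.add hg)

namespace HilbertBasis

variable {ι 𝕜 E : Type*} [RCLike 𝕜] [NormedAddCommGroup E] [InnerProductSpace 𝕜 E]

theorem continuousLinearMap_ext {F : Type*} [TopologicalSpace F] [AddCommMonoid F] [Module 𝕜 F]
    [T2Space F] (b : HilbertBasis ι 𝕜 E) {f g : E →L[𝕜] F} (h : ∀ i, f (b i) = g (b i)) :
    f = g :=
  ext_on (Submodule.dense_iff_topologicalClosure_eq_top.2 b.dense_span) (Set.forall_mem_range.2 h)

theorem inner_apply_of_apply_eq_smul (b : HilbertBasis ι 𝕜 E) {M : E →L[𝕜] E} {μ : ι → 𝕜}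
    (hM : ∀ i, M (b i) = μ i • b i) (i : ι) (x : E) :
    inner 𝕜 (b i) (M x) = μ i * inner 𝕜 (b i) x := by
  have : (innerSL 𝕜 (b i)).comp M = μ i • innerSL 𝕜 (b i) := by
    refine b.continuousLinearMap_ext fun j => ?_
    by_cases hij : i = j
    · subst hij
      simp [hM]
    · simp [hM, b.orthonormal.inner_eq_zero hij]
  simpa using DFunLike.congr_fun this x

theorem inner_apply_of_apply_eq_succ [CompleteSpace E] (b : HilbertBasis ℤ 𝕜 E) {T : E →L[𝕜] E}
    (hT : adjoint T ∘L T = 1) (hTb : ∀ k, T (b k) = b (k + 1)) (k : ℤ) (x : E) :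
    inner 𝕜 (b k) (T x) = inner 𝕜 (b (k - 1)) x := by
  have : adjoint T (b k) = b (k - 1) := by
    simpa [hTb] using DFunLike.congr_fun hT (b (k - 1))
  rw [← adjoint_inner_left, this]

theorem inner_comp_add_comp_adjoint_apply [CompleteSpace E] (b : HilbertBasis ℤ 𝕜 E)
    {T M N : E →L[𝕜] E} (hT : adjoint T ∘L T = 1) (hTb : ∀ k, T (b k) = b (k + 1))
    {μ ν : ℤ → 𝕜} (hM : ∀ k, M (b k) = μ k • b k)
    (hN : ∀ k, N (b k) = ν k • b k) (k : ℤ) (x : E) :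
    inner 𝕜 (b k) ((T ∘L M + N ∘L adjoint T) x)
      = μ (k - 1) * inner 𝕜 (b (k - 1)) x + ν k * inner 𝕜 (b (k + 1)) x := by
  rw [add_apply, inner_add_right, comp_apply, comp_apply, b.inner_apply_of_apply_eq_succ hT hTb,
    b.inner_apply_of_apply_eq_smul hM, b.inner_apply_of_apply_eq_smul hN, adjoint_inner_right,
    hTb]

theorem summable_norm_inner_mul_norm_inner_succ (b : HilbertBasis ℤ 𝕜 E) (x y : E) :
    Summable fun k => ‖inner 𝕜 (b k) x‖ * ‖inner 𝕜 (b (k + 1)) y‖ :=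
  (Orthonormal.inner_products_summable x b.orthonormal).norm_mul_norm
    ((Orthonormal.inner_products_summable y b.orthonormal).comp_injective (add_left_injective 1))

end HilbertBasis

theorem diagonal_C1_of_conjugate_operator_general
    (e : HilbertBasis ℤ ℂ H)
    (T : H →L[ℂ] H) (hT : IsUnitaryCLM T)
    (hTe : ∀ k : ℤ, T (e k) = e (k + 1))
    (γ : ℤ → ℂ)
    (Dγ : H →L[ℂ] H) (hDγ : ∀ k : ℤ, Dγ (e k) = γ k • e k)
    -- `B` is the conjugate operator `TA + AT*`
    (B : H →ₗ.[ℂ] H)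
    (hBval : ∀ (ψ : B.domain) (k : ℤ),
      ⟪e k, B ψ⟫ = ((k : ℂ) - 1) * ⟪e (k - 1), (ψ : H)⟫ + (k : ℂ) * ⟪e (k + 1), (ψ : H)⟫)
    -- the diagonal operators `D_{x(γ - Sγ)}` and `D_{x(Sγ - γ)}`
    (D1 D2 : H →L[ℂ] H)
    (hD1 : ∀ k : ℤ, D1 (e k) = ((k : ℂ) * (γ k - γ (k + 1))) • e k)
    (hD2 : ∀ k : ℤ, D2 (e k) = ((k : ℂ) * (γ (k + 1) - γ k)) • e k) :
    HasCommutator B Dγ (T ∘L D1 + D2 ∘L adjoint T) := by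
  intro φ ψ
  set a : ℤ → ℂ := fun k => ⟪e k, (φ : H)⟫
  set d : ℤ → ℂ := fun k => ⟪e k, Dγ ψ⟫
  set t : ℤ → ℂ := fun k => k * (conj (a k) * d (k + 1) - conj (a (k + 1)) * d k)
  have hsum : HasSum (fun k => t (k - 1) - t k)
      (⟪B φ, Dγ ψ⟫ - ⟪(φ : H), Dγ (B ψ)⟫ - ⟪(φ : H), (T ∘L D1 + D2 ∘L adjoint T) ψ⟫) := by
    refine (((e.hasSum_inner_mul_inner _ _).sub (e.hasSum_inner_mul_inner _ _)).sub
      (e.hasSum_inner_mul_inner _ _)).congr_fun fun k => ?_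
    simp only [t, d, ← inner_conj_symm _ (e _), hBval,
      e.inner_comp_add_comp_adjoint_apply hT.1 hTe hD1 hD2,
      e.inner_apply_of_apply_eq_smul hDγ, sub_add_cancel, map_add, map_mul, map_sub, map_one,
      map_intCast]
    push_cast
    ring
  have hbound : ∀ k, ‖t k‖ ≤ |(k : ℝ)| * (‖a k‖ * ‖d (k + 1)‖ + ‖a (k + 1)‖ * ‖d k‖) := by
    intro k
    calc ‖t k‖ ≤ ‖(k : ℂ)‖ * (‖conj (a k) * d (k + 1)‖ + ‖conj (a (k + 1)) * d k‖) := by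
          rw [norm_mul]; gcongr; exact norm_sub_le _ _
      _ = _ := by simp [Complex.norm_intCast]
  have hc : Summable fun k => ‖a k‖ * ‖d (k + 1)‖ + ‖a (k + 1)‖ * ‖d k‖ :=
    (e.summable_norm_inner_mul_norm_inner_succ _ _).add
      ((e.summable_norm_inner_mul_norm_inner_succ _ _).congr fun k => mul_comm _ _)
  exact sub_eq_zero.mp (hsum.eq_zero_of_int_telescope hc hbound)

/-- Let `T` be the bilateral shift on `ℓ²(ℤ)`, `A` the position operator
and `B` the (self-adjoint closure of the) conjugate operator `TA + AT*`. If `γ` is a bounded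
sequence with `sup_k |k (γ_{k+1} - γ_k)| < ∞`, then the diagonal operator `D_γ` belongs to
`C¹(TA + AT*)`, with `ad_{TA+AT*}(D_γ) = T·D_{x(γ - Sγ)} + D_{x(Sγ - γ)}·T*`. -/
theorem diagonal_C1_of_conjugate_operator
    (e : HilbertBasis ℤ ℂ H)
    (T : H →L[ℂ] H) (hT : IsUnitaryCLM T)
    (hTe : ∀ k : ℤ, T (e k) = e (k + 1))
    (γ : ℤ → ℂ)
    (hγbdd : ∃ M : ℝ, ∀ k : ℤ, ‖γ k‖ ≤ M)
    (hγ : ∃ M : ℝ, ∀ k : ℤ, ‖(k : ℂ) * (γ (k + 1) - γ k)‖ ≤ M)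
    (Dγ : H →L[ℂ] H) (hDγ : ∀ k : ℤ, Dγ (e k) = γ k • e k)
    -- `B` is the conjugate operator `TA + AT*`
    (B : H →ₗ.[ℂ] H) (hBsa : IsSelfAdjoint B)
    (hBe : ∀ k : ℤ, e k ∈ B.domain)
    (hBval : ∀ (ψ : B.domain) (k : ℤ),
      ⟪e k, B ψ⟫ = ((k : ℂ) - 1) * ⟪e (k - 1), (ψ : H)⟫ + (k : ℂ) * ⟪e (k + 1), (ψ : H)⟫)
    -- the diagonal operators `D_{x(γ - Sγ)}` and `D_{x(Sγ - γ)}`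
    (D1 D2 : H →L[ℂ] H)
    (hD1 : ∀ k : ℤ, D1 (e k) = ((k : ℂ) * (γ k - γ (k + 1))) • e k)
    (hD2 : ∀ k : ℤ, D2 (e k) = ((k : ℂ) * (γ (k + 1) - γ k)) • e k) :
    HasCommutator B Dγ (T ∘L D1 + D2 ∘L adjoint T) :=
  diagonal_C1_of_conjugate_operator_general e T hT hTe γ Dγ hDγ B hBval D1 D2 hD1 hD2
end
end
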